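/- arXiv:2210.13573 — 2 statements merged into one kernel-verified Lean document; each statement's English description precedes it below -/
import Mathlib

section
/- Let q ∈ (0,1), θ = min(q, 1-q), and let D be a distribution on [0,1] with q-expectile f*. Then for any v̂ ∈ [0,1], E_{v∼D}[g(v̂, v) - g(f*, v)] ≥ θ·(v̂ - f*)², where g(u, v) = (1-q)((v-u)_+)² + q((u-v)_+)² is the expectile loss. -/
/-!
The expectile loss `u ↦ g u v` is `θ (u - v)²` plus a convex function, hence `2θ`-strongly
convex, and strong convexity survives averaging over `v`. A `2θ`-strongly convex function exceeds
its minimum over a convex set by at least `θ` times the squared distance to the minimizer: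
compare its value at the minimizer with the values along the segment towards the other point, and
let the step shrink to `0`.
-/

open MeasureTheory Set Filter Topology

section StrongConvexity

variable {E : Type*} [NormedAddCommGroup E] [NormedSpace ℝ E] {s : Set E} {m : ℝ} {f : E → ℝ}

lemma StrongConvexOn.mul_sq_norm_sub_le_of_isMinOn (hf : StrongConvexOn s m f)
    {x y : E} (hmin : IsMinOn f s x) (hx : x ∈ s) (hy : y ∈ s) :
    m / 2 * ‖y - x‖ ^ 2 ≤ f y - f x := by
  have hseg : ∀ t ∈ Ioo (0 : ℝ) 1, (1 - t) * (m / 2 * ‖y - x‖ ^ 2) ≤ f y - f x := by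
    intro t ⟨ht0, ht1⟩
    have hconv := hf.2 hy hx ht0.le (sub_nonneg.2 ht1.le) (add_sub_cancel t 1)
    have hle := isMinOn_iff.1 hmin _ (hf.1 hy hx ht0.le (sub_nonneg.2 ht1.le) (add_sub_cancel t 1))
    simp only [smul_eq_mul] at hconv
    have : t * ((1 - t) * (m / 2 * ‖y - x‖ ^ 2)) ≤ t * (f y - f x) := by linarith
    exact le_of_mul_le_mul_left this ht0
  have hlim : Tendsto (fun t : ℝ => (1 - t) * (m / 2 * ‖y - x‖ ^ 2)) (𝓝[>] 0)
      (𝓝 (m / 2 * ‖y - x‖ ^ 2)) :=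
    tendsto_nhdsWithin_of_tendsto_nhds (Continuous.tendsto' (by fun_prop) 0 _ (by simp))
  exact le_of_tendsto hlim (eventually_of_mem (Ioo_mem_nhdsGT one_pos) hseg)

end StrongConvexity

section Integral

variable {E α : Type*} [NormedAddCommGroup E] [NormedSpace ℝ E] [MeasurableSpace α]
  {μ : Measure α} [IsProbabilityMeasure μ] {s : Set E} {φ : ℝ → ℝ} {f : E → α → ℝ}

lemma uniformConvexOn_integral (hf : ∀ a, UniformConvexOn s φ (f · a))
    (hint : ∀ x ∈ s, Integrable (f x) μ) :
    UniformConvexOn s φ (fun x => ∫ a, f x a ∂μ) := by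
  have hs : Convex ℝ s := (hf (nonempty_of_isProbabilityMeasure μ).some).1
  refine ⟨hs, fun x hx y hy a b ha hb hab => ?_⟩
  have hxy := hint _ (hs hx hy ha hb hab)
  have hsum : Integrable (fun v => a * f x v + b * f y v) μ :=
    ((hint x hx).const_mul a).add ((hint y hy).const_mul b)
  calc ∫ v, f (a • x + b • y) v ∂μ
      ≤ ∫ v, (a * f x v + b * f y v - a * b * φ ‖x - y‖) ∂μ :=
        integral_mono hxy (hsum.sub (integrable_const _)) fun v => (hf v).2 hx hy ha hb hab
    _ = a • ∫ v, f x v ∂μ + b • ∫ v, f y v ∂μ - a * b * φ ‖x - y‖ := by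
        rw [integral_sub hsum (integrable_const _),
          integral_add ((hint x hx).const_mul a) ((hint y hy).const_mul b), integral_const_mul,
          integral_const_mul, integral_const]
        simp

end Integral

lemma Continuous.integrable_of_ae_mem_compact {X : Type*} [TopologicalSpace X] [T2Space X]
    [MeasurableSpace X] [OpensMeasurableSpace X] {μ : Measure X} [IsFiniteMeasure μ] {K : Set X}
    {f : X → ℝ} (hf : Continuous f) (hK : IsCompact K) (hμ : ∀ᵐ x ∂μ, x ∈ K) :
    Integrable f μ := by
  rw [← Measure.restrict_eq_self_of_ae_mem hμ]
  exact hf.continuousOn.integrableOn_compact hK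

lemma strongConvexOn_mul_sq_sub {s : Set ℝ} (hs : Convex ℝ s) (θ v : ℝ) :
    StrongConvexOn s (2 * θ) (fun u => θ * (u - v) ^ 2) := by
  refine ⟨hs, fun x _ y _ a b _ _ hab => le_of_eq ?_⟩
  obtain rfl : b = 1 - a := by linarith
  simp only [smul_eq_mul, Real.norm_eq_abs, sq_abs]
  ring

lemma convexOn_max_zero_sq {s : Set ℝ} (hs : Convex ℝ s) {f : ℝ → ℝ} (hf : ConvexOn ℝ s f) :
    ConvexOn ℝ s (fun u => max (f u) 0 ^ 2) :=
  (hf.sup (convexOn_const 0 hs)).pow (fun _ _ => le_max_right _ _) 2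

def expectileLoss (q u v : ℝ) : ℝ :=
  (1 - q) * max (v - u) 0 ^ 2 + q * max (u - v) 0 ^ 2

lemma expectileLoss_eq (q θ u v : ℝ) :
    expectileLoss q u v
      = θ * (u - v) ^ 2 + ((1 - q - θ) * max (v - u) 0 ^ 2 + (q - θ) * max (u - v) 0 ^ 2) := by
  rcases le_total u v with h | h
  · rw [expectileLoss, max_eq_left (sub_nonneg.2 h), max_eq_right (sub_nonpos.2 h)]; ring
  · rw [expectileLoss, max_eq_right (sub_nonpos.2 h), max_eq_left (sub_nonneg.2 h)]; ring

lemma strongConvexOn_expectileLoss {s : Set ℝ} (hs : Convex ℝ s) (q v : ℝ) :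
    StrongConvexOn s (2 * min q (1 - q)) (expectileLoss q · v) := by
  set θ := min q (1 - q)
  have hleft : ConvexOn ℝ s (fun u => max (v - u) 0 ^ 2) :=
    convexOn_max_zero_sq hs ((convexOn_const v hs).sub (concaveOn_id hs))
  have hright : ConvexOn ℝ s (fun u => max (u - v) 0 ^ 2) :=
    convexOn_max_zero_sq hs ((convexOn_id hs).sub (concaveOn_const v hs))
  have hrest := (hleft.smul (sub_nonneg.2 (min_le_right q (1 - q)) : 0 ≤ 1 - q - θ)).add
    (hright.smul (sub_nonneg.2 (min_le_left q (1 - q)) : 0 ≤ q - θ))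
  have := (strongConvexOn_mul_sq_sub hs θ v).add hrest.uniformConvexOn_zero
  rw [add_zero] at this
  rwa [show (expectileLoss q · v) = _ from funext fun u => expectileLoss_eq q θ u v]

theorem expectile_excess_loss_lower_bound_general
    (q : ℝ)
    (μ : Measure ℝ) [IsProbabilityMeasure μ]
    (hsupp : ∀ᵐ v ∂μ, v ∈ Icc (0:ℝ) 1)
    (g : ℝ → ℝ → ℝ)
    (hg : ∀ u v, g u v = (1 - q) * (max (v - u) 0) ^ 2 + q * (max (u - v) 0) ^ 2)
    (fstar : ℝ) (hfstar : fstar ∈ Icc (0:ℝ) 1)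
    (hmin : ∀ u ∈ Icc (0:ℝ) 1, (∫ v, g fstar v ∂μ) ≤ ∫ v, g u v ∂μ)
    (vhat : ℝ) (hvhat : vhat ∈ Icc (0:ℝ) 1) :
    min q (1 - q) * (vhat - fstar) ^ 2 ≤ ∫ v, (g vhat v - g fstar v) ∂μ := by
  obtain rfl : g = expectileLoss q := funext₂ hg
  have hint (u : ℝ) : Integrable (expectileLoss q u) μ := by
    have hcont : Continuous (expectileLoss q u) := by unfold expectileLoss; fun_prop
    exact hcont.integrable_of_ae_mem_compact isCompact_Icc hsupp
  have hconv :
      StrongConvexOn (Icc 0 1) (2 * min q (1 - q)) (fun u => ∫ v, expectileLoss q u v ∂μ) :=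
    uniformConvexOn_integral (fun v => strongConvexOn_expectileLoss (convex_Icc 0 1) q v)
      fun u _ => hint u
  have := hconv.mul_sq_norm_sub_le_of_isMinOn hmin hfstar hvhat
  rw [integral_sub (hint vhat) (hint fstar)]
  simpa [Real.norm_eq_abs, sq_abs] using this

/-- Excess expectile loss at `vhat` relative to the `q`-expectile `f*` is at least
`θ (vhat - f*)²` with `θ = min q (1-q)`. -/
theorem expectile_excess_loss_lower_bound
    (q : ℝ) (hq : q ∈ Ioo (0:ℝ) 1)
    (μ : Measure ℝ) [IsProbabilityMeasure μ]
    (hsupp : ∀ᵐ v ∂μ, v ∈ Icc (0:ℝ) 1)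
    (g : ℝ → ℝ → ℝ)
    (hg : ∀ u v, g u v = (1 - q) * (max (v - u) 0) ^ 2 + q * (max (u - v) 0) ^ 2)
    (fstar : ℝ) (hfstar : fstar ∈ Icc (0:ℝ) 1)
    (hmin : ∀ u ∈ Icc (0:ℝ) 1, (∫ v, g fstar v ∂μ) ≤ ∫ v, g u v ∂μ)
    (vhat : ℝ) (hvhat : vhat ∈ Icc (0:ℝ) 1) :
    min q (1 - q) * (vhat - fstar) ^ 2 ≤ ∫ v, (g vhat v - g fstar v) ∂μ :=
  expectile_excess_loss_lower_bound_general q μ hsupp g hg fstar hfstar hmin vhat hvhat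
end

section
/- Let q ∈ (0,1), θ = min(q, 1-q), let D be a distribution on [0,1] with q-expectile f*, and let v̂ ∈ [0,1]. Define Z = g(v̂, V) - g(f*, V) for V ∼ D, where g is the expectile loss. Then E[Z²] ≤ (1/θ)·E[Z]. -/
set_option maxHeartbeats 1000000

open MeasureTheory Set

lemma lemA (q a b v : ℝ) (hq0 : 0 < q) (hq1 : q < 1)
    (ha0 : 0 ≤ a) (ha1 : a ≤ 1) (hb0 : 0 ≤ b) (hb1 : b ≤ 1) (hv0 : 0 ≤ v) (hv1 : v ≤ 1) :
    min q (1-q) * ((1-q)*(max (v-a) 0)^2 + q*(max (a-v) 0)^2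
        - ((1-q)*(max (v-b) 0)^2 + q*(max (b-v) 0)^2))^2
      ≤ ((1-q)*(max (v-a) 0)^2 + q*(max (a-v) 0)^2
        - ((1-q)*(max (v-b) 0)^2 + q*(max (b-v) 0)^2))
        - (2*q*max (b-v) 0 - 2*(1-q)*max (v-b) 0) * (a-b) := by
  have hθ1 : min q (1-q) ≤ 1 := le_trans (min_le_left _ _) (by linarith)
  have hθ0 : (0:ℝ) ≤ min q (1-q) := le_min hq0.le (by linarith)
  rcases le_total v a with hva | hav
  · rw [max_eq_right (by linarith), max_eq_left (by linarith)]
    rcases le_total v b with hvb | hbv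
    · rw [max_eq_right (by linarith), max_eq_left (by linarith)]
      have e1 : ((1-q)*(0:ℝ)^2 + q*(a-v)^2 - ((1-q)*0^2 + q*(b-v)^2))^2
          = (a-b)^2 * (q*(a+b-2*v))^2 := by ring
      have e2 : ((1-q)*(0:ℝ)^2 + q*(a-v)^2 - ((1-q)*0^2 + q*(b-v)^2))
          - (2*q*(b-v) - 2*(1-q)*0) * (a-b) = q*(a-b)^2 := by ring
      rw [e1, e2]
      rcases min_cases q (1-q) with ⟨hm, hle⟩ | ⟨hm, hle⟩ <;> rw [hm]
      · have ht0 : 0 ≤ q*(a+b-2*v) := mul_nonneg hq0.le (by linarith)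
        have ht1 : q*(a+b-2*v) ≤ 1 := by nlinarith
        have h3 : (q*(a+b-2*v))^2 ≤ 1 := by nlinarith
        have e3 : q * ((a-b)^2 * (q*(a+b-2*v))^2) = (q*(a-b)^2) * (q*(a+b-2*v))^2 := by ring
        rw [e3]
        exact mul_le_of_le_one_right (by positivity) h3
      · have h3 : (1-q) * (q*(a+b-2*v))^2 ≤ q := by
          nlinarith [sq_nonneg (2*q-1), sq_nonneg (a+b-2*v), sq_nonneg (q*(a+b-2*v-2)),
            mul_pos hq0 (by linarith : (0:ℝ) < 1-q)]
        have e3 : (1-q) * ((a-b)^2 * (q*(a+b-2*v))^2)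
            = (a-b)^2 * ((1-q) * (q*(a+b-2*v))^2) := by ring
        rw [e3]
        calc (a-b)^2 * ((1-q) * (q*(a+b-2*v))^2) ≤ (a-b)^2 * q :=
              mul_le_mul_of_nonneg_left h3 (sq_nonneg _)
          _ = q*(a-b)^2 := by ring
    · rw [max_eq_left (by linarith), max_eq_right (by linarith)]
      have hx0 : 0 ≤ a - v := by linarith
      have hy0 : 0 ≤ v - b := by linarith
      have hS1 : q*(a-v)^2 + (1-q)*(v-b)^2 ≤ 1 := by
        nlinarith [sq_nonneg (1-(a-v)), sq_nonneg (1-(v-b))]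
      have hS0 : (0:ℝ) ≤ q*(a-v)^2 + (1-q)*(v-b)^2 := add_nonneg (mul_nonneg hq0.le (sq_nonneg _)) (mul_nonneg (by linarith) (sq_nonneg _))
      have hZ2 : (q*(a-v)^2 - (1-q)*(v-b)^2)^2 ≤ (q*(a-v)^2 + (1-q)*(v-b)^2)^2 := by
        nlinarith [mul_nonneg (mul_nonneg (mul_nonneg hq0.le (by linarith : (0:ℝ) ≤ 1-q)) (sq_nonneg (a-v))) (sq_nonneg (v-b))]
      have e2 : ((1-q)*(0:ℝ)^2 + q*(a-v)^2 - ((1-q)*(v-b)^2 + q*0^2))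
          - (2*q*0 - 2*(1-q)*(v-b)) * (a-b)
          = (q*(a-v)^2 - (1-q)*(v-b)^2) + 2*(1-q)*(v-b)*(a-b) := by ring
      have e1 : ((1-q)*(0:ℝ)^2 + q*(a-v)^2 - ((1-q)*(v-b)^2 + q*0^2))^2
          = (q*(a-v)^2 - (1-q)*(v-b)^2)^2 := by ring
      rw [e1, e2]
      have hA : min q (1-q) * (q*(a-v)^2 - (1-q)*(v-b)^2)^2
          ≤ (q*(a-v)^2 - (1-q)*(v-b)^2)^2 := mul_le_of_le_one_left (sq_nonneg _) hθ1
      have hC : (q*(a-v)^2 + (1-q)*(v-b)^2)^2 ≤ q*(a-v)^2 + (1-q)*(v-b)^2 := by nlinarith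
      have hD : q*(a-v)^2 + (1-q)*(v-b)^2
          ≤ (q*(a-v)^2 - (1-q)*(v-b)^2) + 2*(1-q)*(v-b)*(a-b) := by
        nlinarith [mul_nonneg (mul_nonneg (by linarith : (0:ℝ) ≤ 1-q) hy0) hx0]
      linarith
  · rw [max_eq_left (by linarith), max_eq_right (by linarith)]
    rcases le_total v b with hvb | hbv
    · rw [max_eq_right (by linarith), max_eq_left (by linarith)]
      have hx0 : 0 ≤ v - a := by linarith
      have hy0 : 0 ≤ b - v := by linarith
      have hS1 : (1-q)*(v-a)^2 + q*(b-v)^2 ≤ 1 := by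
        nlinarith [sq_nonneg (1-(v-a)), sq_nonneg (1-(b-v))]
      have hS0 : (0:ℝ) ≤ (1-q)*(v-a)^2 + q*(b-v)^2 := add_nonneg (mul_nonneg (by linarith) (sq_nonneg _)) (mul_nonneg hq0.le (sq_nonneg _))
      have hZ2 : ((1-q)*(v-a)^2 - q*(b-v)^2)^2 ≤ ((1-q)*(v-a)^2 + q*(b-v)^2)^2 := by
        nlinarith [mul_nonneg (mul_nonneg (mul_nonneg hq0.le (by linarith : (0:ℝ) ≤ 1-q)) (sq_nonneg (v-a))) (sq_nonneg (b-v))]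
      have e2 : ((1-q)*(v-a)^2 + q*(0:ℝ)^2 - ((1-q)*0^2 + q*(b-v)^2))
          - (2*q*(b-v) - 2*(1-q)*0) * (a-b)
          = ((1-q)*(v-a)^2 - q*(b-v)^2) + 2*q*(b-v)*(b-a) := by ring
      have e1 : ((1-q)*(v-a)^2 + q*(0:ℝ)^2 - ((1-q)*0^2 + q*(b-v)^2))^2
          = ((1-q)*(v-a)^2 - q*(b-v)^2)^2 := by ring
      rw [e1, e2]
      have hA : min q (1-q) * ((1-q)*(v-a)^2 - q*(b-v)^2)^2
          ≤ ((1-q)*(v-a)^2 - q*(b-v)^2)^2 := mul_le_of_le_one_left (sq_nonneg _) hθ1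
      have hC : ((1-q)*(v-a)^2 + q*(b-v)^2)^2 ≤ (1-q)*(v-a)^2 + q*(b-v)^2 := by nlinarith
      have hD : (1-q)*(v-a)^2 + q*(b-v)^2
          ≤ ((1-q)*(v-a)^2 - q*(b-v)^2) + 2*q*(b-v)*(b-a) := by
        nlinarith [mul_nonneg (mul_nonneg hq0.le hy0) hx0]
      linarith
    · rw [max_eq_left (by linarith), max_eq_right (by linarith)]
      have e1 : ((1-q)*(v-a)^2 + q*(0:ℝ)^2 - ((1-q)*(v-b)^2 + q*0^2))^2
          = (a-b)^2 * ((1-q)*(2*v-a-b))^2 := by ring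
      have e2 : ((1-q)*(v-a)^2 + q*(0:ℝ)^2 - ((1-q)*(v-b)^2 + q*0^2))
          - (2*q*0 - 2*(1-q)*(v-b)) * (a-b) = (1-q)*(a-b)^2 := by ring
      rw [e1, e2]
      rcases min_cases q (1-q) with ⟨hm, hle⟩ | ⟨hm, hle⟩ <;> rw [hm]
      · have h3 : q * ((1-q)*(2*v-a-b))^2 ≤ (1-q) := by
          nlinarith [sq_nonneg (2*q-1), sq_nonneg (2*v-a-b), sq_nonneg ((1-q)*(2*v-a-b-2)),
            mul_pos hq0 (by linarith : (0:ℝ) < 1-q)]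
        have e3 : q * ((a-b)^2 * ((1-q)*(2*v-a-b))^2)
            = (a-b)^2 * (q * ((1-q)*(2*v-a-b))^2) := by ring
        rw [e3]
        calc (a-b)^2 * (q * ((1-q)*(2*v-a-b))^2) ≤ (a-b)^2 * (1-q) :=
              mul_le_mul_of_nonneg_left h3 (sq_nonneg _)
          _ = (1-q)*(a-b)^2 := by ring
      · have ht0 : 0 ≤ (1-q)*(2*v-a-b) := mul_nonneg (by linarith) (by linarith)
        have ht1 : (1-q)*(2*v-a-b) ≤ 1 := by nlinarith
        have h3 : ((1-q)*(2*v-a-b))^2 ≤ 1 := by nlinarith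
        have e3 : (1-q) * ((a-b)^2 * ((1-q)*(2*v-a-b))^2)
            = ((1-q)*(a-b)^2) * ((1-q)*(2*v-a-b))^2 := by ring
        rw [e3]
        exact mul_le_of_le_one_right (mul_nonneg (by linarith) (sq_nonneg _)) h3

lemma lemB (q u u' v : ℝ) (hq0 : 0 ≤ q) (hq1 : q ≤ 1) :
    (1-q)*(max (v-u') 0)^2 + q*(max (u'-v) 0)^2
      ≤ (1-q)*(max (v-u) 0)^2 + q*(max (u-v) 0)^2
        + (2*q*max (u-v) 0 - 2*(1-q)*max (v-u) 0) * (u'-u) + (u'-u)^2 := by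
  rcases le_total u v with h1 | h1 <;> rcases le_total u' v with h2 | h2
  · rw [max_eq_left (by linarith), max_eq_right (by linarith),
      max_eq_left (by linarith), max_eq_right (by linarith)]
    nlinarith [sq_nonneg (u'-u)]
  · rw [max_eq_right (by linarith), max_eq_left (by linarith),
      max_eq_left (by linarith), max_eq_right (by linarith)]
    nlinarith [sq_nonneg (v-u), sq_nonneg (u'-v), mul_nonneg (mul_nonneg hq0 (by linarith : (0:ℝ) ≤ v-u)) (by linarith : (0:ℝ) ≤ u'-v)]
  · rw [max_eq_left (by linarith), max_eq_right (by linarith),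
      max_eq_right (by linarith), max_eq_left (by linarith)]
    nlinarith [sq_nonneg (u-v), sq_nonneg (v-u'), mul_nonneg (mul_nonneg (by linarith : (0:ℝ) ≤ 1-q) (by linarith : (0:ℝ) ≤ u-v)) (by linarith : (0:ℝ) ≤ v-u')]
  · rw [max_eq_right (by linarith), max_eq_left (by linarith),
      max_eq_right (by linarith), max_eq_left (by linarith)]
    nlinarith [sq_nonneg (u'-u)]

/-- With `Z = g(vhat,V) - g(f*,V)` for `V ∼ D` and `f*` the `q`-expectile,
`E[Z²] ≤ (1/θ) E[Z]` where `θ = min q (1-q)`. -/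
theorem expectile_excess_loss_second_moment
    (q : ℝ) (hq : q ∈ Ioo (0:ℝ) 1)
    (μ : Measure ℝ) [IsProbabilityMeasure μ]
    (hsupp : ∀ᵐ v ∂μ, v ∈ Icc (0:ℝ) 1)
    (g : ℝ → ℝ → ℝ)
    (hg : ∀ u v, g u v = (1 - q) * (max (v - u) 0) ^ 2 + q * (max (u - v) 0) ^ 2)
    (fstar : ℝ) (hfstar : fstar ∈ Icc (0:ℝ) 1)
    (hmin : ∀ u ∈ Icc (0:ℝ) 1, (∫ v, g fstar v ∂μ) ≤ ∫ v, g u v ∂μ)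
    (vhat : ℝ) (hvhat : vhat ∈ Icc (0:ℝ) 1) :
    (∫ v, (g vhat v - g fstar v) ^ 2 ∂μ) ≤
      (1 / min q (1 - q)) * ∫ v, (g vhat v - g fstar v) ∂μ := by
  obtain ⟨hq0, hq1⟩ := hq
  obtain ⟨hb0, hb1⟩ := hfstar
  obtain ⟨ha0, ha1⟩ := hvhat
  set θ := min q (1 - q) with hθdef
  have hθ0 : (0:ℝ) < θ := lt_min hq0 (by linarith)
  set δ := vhat - fstar with hδdef
  set φ : ℝ → ℝ := fun v => 2*q*max (fstar - v) 0 - 2*(1-q)*max (v - fstar) 0 with hφdef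
  -- continuity of the ingredients
  have hcont : ∀ u : ℝ, Continuous (fun v => (1-q)*(max (v-u) 0)^2 + q*(max (u-v) 0)^2) := by
    intro u; fun_prop
  have hφcont : Continuous φ := by rw [hφdef]; fun_prop
  -- integrability of v ↦ g u v for u ∈ [0,1]
  have hgeq : ∀ u : ℝ, (fun v => g u v) = fun v => (1-q)*(max (v-u) 0)^2 + q*(max (u-v) 0)^2 := by
    intro u; funext v; rw [hg u v]
  have hmax01 : ∀ x y : ℝ, x ∈ Icc (0:ℝ) 1 → y ∈ Icc (0:ℝ) 1 →
      0 ≤ max (x - y) 0 ∧ max (x - y) 0 ≤ 1 := by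
    intro x y hx hy
    exact ⟨le_max_right _ _, max_le (by linarith [hx.2, hy.1]) zero_le_one⟩
  have hInt : ∀ u, u ∈ Icc (0:ℝ) 1 → Integrable (fun v => g u v) μ := by
    intro u hu
    rw [hgeq u]
    apply (Integrable.mono' (integrable_const (1:ℝ)) (hcont u).aestronglyMeasurable)
    filter_upwards [hsupp] with v hv
    obtain ⟨h1, h2⟩ := hmax01 v u hv hu
    obtain ⟨h3, h4⟩ := hmax01 u v hu hv
    rw [Real.norm_eq_abs, abs_le]
    constructor
    · nlinarith [mul_nonneg (by linarith : (0:ℝ) ≤ 1-q) (sq_nonneg (max (v-u) 0)),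
        mul_nonneg hq0.le (sq_nonneg (max (u-v) 0))]
    · nlinarith [mul_nonneg (by linarith : (0:ℝ) ≤ 1-q) (by nlinarith : (0:ℝ) ≤ 1 - (max (v-u) 0)^2),
        mul_nonneg hq0.le (by nlinarith : (0:ℝ) ≤ 1 - (max (u-v) 0)^2)]
  have hIntZ : Integrable (fun v => g vhat v - g fstar v) μ :=
    (hInt vhat ⟨ha0, ha1⟩).sub (hInt fstar ⟨hb0, hb1⟩)
  have hIntZ2 : Integrable (fun v => (g vhat v - g fstar v)^2) μ := by
    have heq : (fun v => (g vhat v - g fstar v)^2)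
        = fun v => ((1-q)*(max (v-vhat) 0)^2 + q*(max (vhat-v) 0)^2
            - ((1-q)*(max (v-fstar) 0)^2 + q*(max (fstar-v) 0)^2))^2 := by
      funext v; rw [hg, hg]
    rw [heq]
    apply (Integrable.mono' (integrable_const (4:ℝ))
      (by fun_prop : Continuous fun v => ((1-q)*(max (v-vhat) 0)^2 + q*(max (vhat-v) 0)^2
            - ((1-q)*(max (v-fstar) 0)^2 + q*(max (fstar-v) 0)^2))^2).aestronglyMeasurable)
    filter_upwards [hsupp] with v hv
    obtain ⟨h1, h2⟩ := hmax01 v vhat hv ⟨ha0, ha1⟩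
    obtain ⟨h3, h4⟩ := hmax01 vhat v ⟨ha0, ha1⟩ hv
    obtain ⟨h5, h6⟩ := hmax01 v fstar hv ⟨hb0, hb1⟩
    obtain ⟨h7, h8⟩ := hmax01 fstar v ⟨hb0, hb1⟩ hv
    rw [Real.norm_eq_abs, abs_le]
    have hA0 : (0:ℝ) ≤ (1-q)*(max (v-vhat) 0)^2 + q*(max (vhat-v) 0)^2 :=
      add_nonneg (mul_nonneg (by linarith) (sq_nonneg _)) (mul_nonneg hq0.le (sq_nonneg _))
    have hA1 : (1-q)*(max (v-vhat) 0)^2 + q*(max (vhat-v) 0)^2 ≤ 1 := by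
      nlinarith [mul_nonneg (by linarith : (0:ℝ) ≤ 1-q) (by nlinarith : (0:ℝ) ≤ 1 - (max (v-vhat) 0)^2),
        mul_nonneg hq0.le (by nlinarith : (0:ℝ) ≤ 1 - (max (vhat-v) 0)^2)]
    have hB0 : (0:ℝ) ≤ (1-q)*(max (v-fstar) 0)^2 + q*(max (fstar-v) 0)^2 :=
      add_nonneg (mul_nonneg (by linarith) (sq_nonneg _)) (mul_nonneg hq0.le (sq_nonneg _))
    have hB1 : (1-q)*(max (v-fstar) 0)^2 + q*(max (fstar-v) 0)^2 ≤ 1 := by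
      nlinarith [mul_nonneg (by linarith : (0:ℝ) ≤ 1-q) (by nlinarith : (0:ℝ) ≤ 1 - (max (v-fstar) 0)^2),
        mul_nonneg hq0.le (by nlinarith : (0:ℝ) ≤ 1 - (max (fstar-v) 0)^2)]
    constructor <;> nlinarith
  have hIntφ : Integrable φ μ := by
    apply (Integrable.mono' (integrable_const (2:ℝ)) hφcont.aestronglyMeasurable)
    filter_upwards [hsupp] with v hv
    obtain ⟨h1, h2⟩ := hmax01 fstar v ⟨hb0, hb1⟩ hv
    obtain ⟨h3, h4⟩ := hmax01 v fstar hv ⟨hb0, hb1⟩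
    rw [Real.norm_eq_abs, abs_le]
    simp only [hφdef]
    constructor <;> nlinarith
  set I := ∫ v, φ v ∂μ with hIdef
  clear_value θ δ φ I
  -- Step 1: for each t ∈ (0,1], 0 ≤ δ*I + t*δ^2
  have step1 : ∀ t : ℝ, 0 < t → t ≤ 1 → 0 ≤ δ * I + t * δ^2 := by
    intro t ht0 ht1
    set u := fstar + t * δ with hudef
    clear_value u
    have hu : u ∈ Icc (0:ℝ) 1 := by
      constructor <;> nlinarith [mul_nonneg ht0.le ha0, mul_nonneg ht0.le hb0,
        mul_nonneg (by linarith : (0:ℝ) ≤ 1 - t) hb0, mul_nonneg (by linarith : (0:ℝ) ≤ 1 - t) ha0,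
        mul_le_of_le_one_left ha0 ht1]
    have hpt : ∀ v : ℝ, g u v ≤ g fstar v + φ v * (t*δ) + (t*δ)^2 := by
      intro v
      rw [hg, hg]
      have := lemB q fstar u v hq0.le hq1.le
      simp only [hφdef]
      have hu' : u - fstar = t * δ := by rw [hudef]; ring
      calc (1-q)*(max (v-u) 0)^2 + q*(max (u-v) 0)^2
          ≤ (1-q)*(max (v-fstar) 0)^2 + q*(max (fstar-v) 0)^2
            + (2*q*max (fstar-v) 0 - 2*(1-q)*max (v-fstar) 0) * (u-fstar) + (u-fstar)^2 := this
        _ = (1-q)*(max (v-fstar) 0)^2 + q*(max (fstar-v) 0)^2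
            + (2*q*max (fstar-v) 0 - 2*(1-q)*max (v-fstar) 0) * (t*δ) + (t*δ)^2 := by
              rw [hu']
    have hIntRHS : Integrable (fun v => g fstar v + φ v * (t*δ) + (t*δ)^2) μ :=
      ((hInt fstar ⟨hb0, hb1⟩).add (hIntφ.mul_const _)).add (integrable_const _)
    have hmono : (∫ v, g u v ∂μ) ≤ ∫ v, (g fstar v + φ v * (t*δ) + (t*δ)^2) ∂μ :=
      integral_mono (hInt u hu) hIntRHS hpt
    have hi1 : Integrable (fun v => g fstar v + φ v * (t*δ)) μ :=
      (hInt fstar ⟨hb0, hb1⟩).add (hIntφ.mul_const _)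
    have hi2 : Integrable (fun v => φ v * (t*δ)) μ := hIntφ.mul_const _
    have hsplit : (∫ v, (g fstar v + φ v * (t*δ) + (t*δ)^2) ∂μ)
        = (∫ v, g fstar v ∂μ) + I * (t*δ) + (t*δ)^2 := by
      rw [integral_add hi1 (integrable_const _),
        integral_add (hInt fstar ⟨hb0, hb1⟩) hi2,
        integral_mul_const, integral_const]
      simp [hIdef, measure_univ]
    have hmin' := hmin u hu
    have hge : 0 ≤ I * (t*δ) + (t*δ)^2 := by
      rw [hsplit] at hmono; linarith
    have ht' : t * 0 ≤ t * (δ * I + t * δ^2) := by nlinarith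
    have := le_of_mul_le_mul_left ht' ht0
    linarith
  -- Step 2: 0 ≤ δ * I
  have step2 : 0 ≤ δ * I := by
    by_contra hneg
    push_neg at hneg
    rcases eq_or_ne δ 0 with hδ0 | hδ0
    · rw [hδ0] at hneg; simp at hneg
    · have hδ2 : 0 < δ^2 := by positivity
      have hhalf : (0:ℝ) < -(δ*I)/2 := by linarith
      set t := min 1 ((-(δ*I)/2) / δ^2) with htdef
      clear_value t
      have htp : 0 < t := by rw [htdef]; exact lt_min one_pos (div_pos hhalf hδ2)
      have ht1 : t ≤ 1 := by rw [htdef]; exact min_le_left _ _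
      have h1 := step1 t htp ht1
      have h2 : t * δ^2 ≤ (-(δ*I)/2) := by
        have : t ≤ (-(δ*I)/2) / δ^2 := by rw [htdef]; exact min_le_right _ _
        calc t * δ^2 ≤ ((-(δ*I)/2) / δ^2) * δ^2 := by
              apply mul_le_mul_of_nonneg_right this (sq_nonneg _)
          _ = -(δ*I)/2 := by field_simp
      linarith
  -- Step 3: pointwise a.e. inequality and integration
  have step3 : ∀ᵐ v ∂μ, θ * (g vhat v - g fstar v)^2 ≤ (g vhat v - g fstar v) - φ v * δ := by
    filter_upwards [hsupp] with v hv
    have := lemA q vhat fstar v hq0 hq1 ha0 ha1 hb0 hb1 hv.1 hv.2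
    rw [hg, hg]
    simp only [hφdef, hδdef, hθdef]
    linarith [this]
  have hIntL : Integrable (fun v => θ * (g vhat v - g fstar v)^2) μ := hIntZ2.const_mul θ
  have hIntR : Integrable (fun v => (g vhat v - g fstar v) - φ v * δ) μ :=
    hIntZ.sub (hIntφ.mul_const δ)
  have step4 : (∫ v, θ * (g vhat v - g fstar v)^2 ∂μ)
      ≤ ∫ v, ((g vhat v - g fstar v) - φ v * δ) ∂μ :=
    integral_mono_ae hIntL hIntR step3
  rw [integral_const_mul, integral_sub hIntZ (hIntφ.mul_const δ), integral_mul_const, ← hIdef] at step4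
  have hfin : θ * (∫ v, (g vhat v - g fstar v)^2 ∂μ) ≤ ∫ v, (g vhat v - g fstar v) ∂μ := by
    have : I * δ = δ * I := mul_comm _ _
    linarith [step2, step4]
  have hθne : θ ≠ 0 := ne_of_gt hθ0
  calc (∫ v, (g vhat v - g fstar v)^2 ∂μ)
      = (1/θ) * (θ * ∫ v, (g vhat v - g fstar v)^2 ∂μ) := by field_simp
    _ ≤ (1/θ) * ∫ v, (g vhat v - g fstar v) ∂μ := by
        apply mul_le_mul_of_nonneg_left hfin (by positivity)
end
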